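/- arXiv:1203.5263 — 2 statements merged into one kernel-verified Lean document; each statement's English description precedes it below -/
import Mathlib

section
/- With f as in the general construction (tent function on [1/2^n, 1/2^{n−1}] integrating to x_n − x_{n−1}), for every n ≥ 1, the Bochner integral ∫_{1/2^n}^{1} f = x_n in E. -/
open Filter Topology

/-- `HasRiemannIntegral f a b y` : the Riemann sums of `f` over tagged partitions of
`[a, b]` converge to `y ∈ E` as the mesh tends to `0`. -/
def HasRiemannIntegral {E : Type*} [NormedAddCommGroup E] [NormedSpace ℝ E]
    (f : ℝ → E) (a b : ℝ) (y : E) : Prop :=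
  ∀ ε > 0, ∃ δ > 0, ∀ (n : ℕ) (p t : ℕ → ℝ),
    p 0 = a → p n = b → (∀ i < n, p i < p (i + 1)) →
    (∀ i < n, p (i + 1) - p i < δ) →
    (∀ i < n, t i ∈ Set.Icc (p i) (p (i + 1))) →
    ‖(∑ i ∈ Finset.range n, (p (i + 1) - p i) • f (t i)) - y‖ < ε

/-!
The tent on `[2^-n, 2^(1-n)]` has slope `4^(n+1)` and half-width `2^-(n+1)`, so its integral is
`x_n - x_(n-1)`, and these integrals telescope to `x_n - x_0 = x_n`. As `E` need not be complete,
the integrals are taken in the completion of `E`: there the continuous function `f` is Riemann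
integrable with the Bochner integral as value, because uniform continuity bounds the error on each
cell by a fixed multiple of its length. Riemann sums are finite, so their convergence pulls back
along the isometric embedding.
-/

open Set MeasureTheory intervalIntegral

section

variable {E : Type*} [NormedAddCommGroup E] [NormedSpace ℝ E]

theorem HasRiemannIntegral.of_linearIsometry {F : Type*} [NormedAddCommGroup F]
    [NormedSpace ℝ F] (L : E →ₗᵢ[ℝ] F) {f : ℝ → E} {a b : ℝ} {y : E}
    (h : HasRiemannIntegral (L ∘ f) a b (L y)) : HasRiemannIntegral f a b y := by
  intro ε hε
  obtain ⟨δ, hδ, H⟩ := h ε hε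
  refine ⟨δ, hδ, fun m p t hp0 hpm hp hmesh ht => ?_⟩
  rw [← L.norm_map]
  simpa only [map_sub, map_sum, map_smul, Function.comp_apply] using H m p t hp0 hpm hp hmesh ht

theorem Icc_subset_Icc_of_partition {p : ℕ → ℝ} {m i : ℕ} (hp : ∀ j < m, p j ≤ p (j + 1))
    (hi : i < m) : Icc (p i) (p (i + 1)) ⊆ Icc (p 0) (p m) := by
  have hmono : MonotoneOn p (Iic m) := monotoneOn_of_le_succ ordConnected_Iic
    fun j _ _ hj => by simpa [Order.succ_eq_add_one] using hp j (by simpa using hj)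
  exact Icc_subset_Icc (hmono (by simp) (by simp; omega) (Nat.zero_le i))
    (hmono (by simp; omega) (by simp) hi)

theorem norm_smul_sub_integral_le [CompleteSpace E] {f : ℝ → E} {p q t η : ℝ}
    (hpq : p ≤ q) (hf : IntervalIntegrable f volume p q) (hη : ∀ x ∈ Icc p q, ‖f t - f x‖ ≤ η) :
    ‖(q - p) • f t - ∫ x in p..q, f x‖ ≤ η * (q - p) := by
  have hconst : (q - p) • f t = ∫ _ in p..q, f t := by rw [intervalIntegral.integral_const]
  rw [hconst, ← integral_sub intervalIntegrable_const hf]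
  have := norm_integral_le_of_norm_le_const fun x hx =>
    hη x (Ioc_subset_Icc_self ((uIoc_of_le hpq) ▸ hx))
  rwa [abs_of_nonneg (sub_nonneg.2 hpq)] at this

theorem hasRiemannIntegral_integral_of_continuousOn [CompleteSpace E] {f : ℝ → E} {a b : ℝ}
    (hf : ContinuousOn f (Icc a b)) : HasRiemannIntegral f a b (∫ x in a..b, f x) := by
  intro ε hε
  obtain ⟨η, hη, hηε⟩ := exists_pos_mul_lt hε (b - a)
  obtain ⟨δ, hδ, hfδ⟩ := Metric.uniformContinuousOn_iff.1
    (isCompact_Icc.uniformContinuousOn_of_continuous hf) η hη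
  refine ⟨δ, hδ, fun m p t hp0 hpm hp hmesh ht => ?_⟩
  have hsub : ∀ i < m, Icc (p i) (p (i + 1)) ⊆ Icc a b := fun i hi =>
    hp0 ▸ hpm ▸ Icc_subset_Icc_of_partition (fun j hj => (hp j hj).le) hi
  have hint : ∀ i < m, IntervalIntegrable f volume (p i) (p (i + 1)) := fun i hi =>
    (hf.mono (hsub i hi)).intervalIntegrable_of_Icc (hp i hi).le
  have hcell : ∀ i ∈ Finset.range m,
      ‖(p (i + 1) - p i) • f (t i) - ∫ x in p i..p (i + 1), f x‖ ≤ η * (p (i + 1) - p i) := by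
    intro i hi
    rw [Finset.mem_range] at hi
    refine norm_smul_sub_integral_le (hp i hi).le (hint i hi) fun x hx => ?_
    have hdist : dist (t i) x < δ :=
      (Real.dist_le_of_mem_Icc (ht i hi) hx).trans_lt (hmesh i hi)
    rw [← dist_eq_norm]
    exact (hfδ _ (hsub i hi (ht i hi)) x (hsub i hi hx) hdist).le
  calc ‖∑ i ∈ Finset.range m, (p (i + 1) - p i) • f (t i) - ∫ x in a..b, f x‖
      = ‖∑ i ∈ Finset.range m, ((p (i + 1) - p i) • f (t i) - ∫ x in p i..p (i + 1), f x)‖ := by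
        rw [Finset.sum_sub_distrib, sum_integral_adjacent_intervals hint, hp0, hpm]
    _ ≤ ∑ i ∈ Finset.range m, η * (p (i + 1) - p i) := norm_sum_le_of_le _ hcell
    _ = η * (b - a) := by rw [← Finset.mul_sum, Finset.sum_range_sub, hp0, hpm]
    _ < ε := by linarith

theorem continuousOn_Icc_of_antitone {X : Type*} [TopologicalSpace X] {f : ℝ → X} {a : ℕ → ℝ}
    (ha : Antitone a) (n : ℕ) (hf : ∀ k < n, ContinuousOn f (Icc (a (k + 1)) (a k))) :
    ContinuousOn f (Icc (a n) (a 0)) := by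
  induction n with
  | zero => simp
  | succ n ih =>
    rw [← Icc_union_Icc_eq_Icc (ha n.le_succ) (ha (Nat.zero_le n))]
    exact (hf n n.lt_succ_self).union_of_isClosed (ih fun k hk => hf k (by omega))
      isClosed_Icc isClosed_Icc

variable {f : ℝ → E} {a m b c : ℝ} {v : E}

theorem continuousOn_tent (ham : a ≤ m) (hmb : m ≤ b)
    (hup : EqOn f (fun x => (c * (x - a)) • v) (Icc a m))
    (hdown : EqOn f (fun x => (c * (b - x)) • v) (Icc m b)) : ContinuousOn f (Icc a b) := by
  rw [← Icc_union_Icc_eq_Icc ham hmb]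
  refine ContinuousOn.union_of_isClosed ?_ ?_ isClosed_Icc isClosed_Icc
  · exact ContinuousOn.congr (by fun_prop) hup
  · exact ContinuousOn.congr (by fun_prop) hdown

theorem integral_tent [CompleteSpace E] (ham : a ≤ m) (hmb : m ≤ b)
    (hup : EqOn f (fun x => (c * (x - a)) • v) (Icc a m))
    (hdown : EqOn f (fun x => (c * (b - x)) • v) (Icc m b)) :
    ∫ x in a..b, f x = (c * ((m - a) ^ 2 + (b - m) ^ 2) / 2) • v := by
  have hf := continuousOn_tent ham hmb hup hdown
  have hup_int : ∫ x in a..m, f x = (c * (m - a) ^ 2 / 2) • v := by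
    rw [integral_congr (uIcc_of_le ham ▸ hup), intervalIntegral.integral_smul_const,
      intervalIntegral.integral_const_mul,
      integral_sub intervalIntegrable_id intervalIntegrable_const, integral_id,
      intervalIntegral.integral_const, smul_eq_mul]
    congr 1; ring
  have hdown_int : ∫ x in m..b, f x = (c * (b - m) ^ 2 / 2) • v := by
    rw [integral_congr (uIcc_of_le hmb ▸ hdown), intervalIntegral.integral_smul_const,
      intervalIntegral.integral_const_mul,
      integral_sub intervalIntegrable_const intervalIntegrable_id, integral_id,
      intervalIntegral.integral_const, smul_eq_mul]
    congr 1; ring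
  rw [← integral_add_adjacent_intervals
      ((hf.mono (Icc_subset_Icc_right hmb)).intervalIntegrable_of_Icc ham)
      ((hf.mono (Icc_subset_Icc_left ham)).intervalIntegrable_of_Icc hmb),
    hup_int, hdown_int, ← add_smul]
  ring_nf

theorem sum_integral_adjacent_intervals_rev [CompleteSpace E] {μ : Measure ℝ}
    [IsLocallyFiniteMeasure μ] {g : ℝ → E} {a : ℕ → ℝ} {n : ℕ}
    (hg : ∀ k < n, IntervalIntegrable g μ (a (k + 1)) (a k)) :
    ∑ k ∈ Finset.range n, ∫ x in a (k + 1)..a k, g x ∂μ = ∫ x in a n..a 0, g x ∂μ := by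
  rw [integral_symm, ← sum_integral_adjacent_intervals fun k hk => (hg k hk).symm,
    ← Finset.sum_neg_distrib]
  exact Finset.sum_congr rfl fun k _ => integral_symm _ _

theorem continuousOn_and_integral_dyadic_tent [CompleteSpace E] (j : ℕ)
    (hup : ∀ x ∈ Icc ((1 : ℝ) / 2 ^ (j + 1)) (3 / 2 ^ (j + 2)),
      f x = ((2 ^ (2 * (j + 1) + 2) : ℝ) * (x - 1 / 2 ^ (j + 1))) • v)
    (hdown : ∀ x ∈ Icc ((3 : ℝ) / 2 ^ (j + 2)) (4 / 2 ^ (j + 2)),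
      f x = ((2 ^ (2 * (j + 1) + 2) : ℝ) * (4 / 2 ^ (j + 2) - x)) • v) :
    ContinuousOn f (Icc (1 / 2 ^ (j + 1)) (1 / 2 ^ j)) ∧
      ∫ x in (1 / 2 ^ (j + 1))..(1 / 2 ^ j), f x = v := by
  have hpow : (0 : ℝ) < 2 ^ j := by positivity
  have ham : (1 : ℝ) / 2 ^ (j + 1) ≤ 3 / 2 ^ (j + 2) := by
    rw [div_le_div_iff₀ (by positivity) (by positivity)]; ring_nf; linarith
  have hmb : (3 : ℝ) / 2 ^ (j + 2) ≤ 4 / 2 ^ (j + 2) := by gcongr; norm_num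
  have hb : (4 : ℝ) / 2 ^ (j + 2) = 1 / 2 ^ j := by
    rw [div_eq_div_iff (by positivity) (by positivity)]; ring
  have hmass : ((2 ^ (2 * (j + 1) + 2) : ℝ) * ((3 / 2 ^ (j + 2) - 1 / 2 ^ (j + 1)) ^ 2 +
      (4 / 2 ^ (j + 2) - 3 / 2 ^ (j + 2)) ^ 2) / 2) = 1 := by
    field_simp; ring
  rw [← hb]
  exact ⟨continuousOn_tent ham hmb hup hdown,
    by rw [integral_tent ham hmb hup hdown, hmass, one_smul]⟩

end

open UniformSpace Completion in
theorem general_tent_integral_general {E : Type*} [NormedAddCommGroup E] [NormedSpace ℝ E]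
    (xs : ℕ → E) (f : ℝ → E)
    (hx0 : xs 0 = 0)
    (h1 : ∀ n : ℕ, 1 ≤ n → ∀ x ∈ Set.Icc ((1:ℝ) / 2 ^ n) (3 / 2 ^ (n + 1)),
      f x = ((2 ^ (2 * n + 2) : ℝ) * (x - 1 / 2 ^ n)) • (xs n - xs (n - 1)))
    (h2 : ∀ n : ℕ, 1 ≤ n → ∀ x ∈ Set.Icc ((3:ℝ) / 2 ^ (n + 1)) (4 / 2 ^ (n + 1)),
      f x = ((2 ^ (2 * n + 2) : ℝ) * (4 / 2 ^ (n + 1) - x)) • (xs n - xs (n - 1)))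
    :
    ∀ n : ℕ, 1 ≤ n → HasRiemannIntegral f ((1:ℝ) / 2 ^ n) 1 (xs n) := by
  intro n _
  set g : ℝ → Completion E := (↑) ∘ f
  have piece (j : ℕ) : ContinuousOn g (Icc (1 / 2 ^ (j + 1)) (1 / 2 ^ j)) ∧
      ∫ x in (1 / 2 ^ (j + 1))..(1 / 2 ^ j), g x = (xs (j + 1) : Completion E) - xs j :=
    continuousOn_and_integral_dyadic_tent j
      (fun x hx => by simp [g, h1 (j + 1) (by omega) x hx, coe_smul, coe_sub])
      (fun x hx => by simp [g, h2 (j + 1) (by omega) x hx, coe_smul, coe_sub])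
  have hanti : Antitone fun k : ℕ => (1 : ℝ) / 2 ^ k := fun i k hik => by
    simp only [one_div]; exact inv_anti₀ (by positivity) (pow_le_pow_right₀ one_le_two hik)
  have hcont : ContinuousOn g (Icc (1 / 2 ^ n) 1) := by
    simpa using continuousOn_Icc_of_antitone hanti n fun k _ => (piece k).1
  have hint : ∫ x in (1 / 2 ^ n)..1, g x = (xs n : Completion E) := by
    have htelescope := sum_integral_adjacent_intervals_rev (μ := volume)
      (a := fun k : ℕ => (1 : ℝ) / 2 ^ k) (n := n)
      fun k _ => (piece k).1.intervalIntegrable_of_Icc (hanti k.le_succ)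
    simp only [pow_zero, div_one] at htelescope
    rw [← htelescope, Finset.sum_congr rfl fun k _ => (piece k).2,
      Finset.sum_range_sub fun k => (xs k : Completion E), hx0, coe_zero, sub_zero]
  have hR := hasRiemannIntegral_integral_of_continuousOn hcont
  rw [hint] at hR
  refine HasRiemannIntegral.of_linearIsometry (toComplₗᵢ (𝕜 := ℝ)) ?_
  rwa [coe_toComplₗᵢ]

/-- For the general tent construction, for every `n ≥ 1`, the integral of `f`
over `[1/2^n, 1]` exists in `E` and equals `x_n`. -/
theorem general_tent_integral {E : Type*} [NormedAddCommGroup E] [NormedSpace ℝ E]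
    (xs : ℕ → E) (f : ℝ → E)
    (h0 : f 0 = 0) (hx0 : xs 0 = 0)
    (h1 : ∀ n : ℕ, 1 ≤ n → ∀ x ∈ Set.Icc ((1:ℝ) / 2 ^ n) (3 / 2 ^ (n + 1)),
      f x = ((2 ^ (2 * n + 2) : ℝ) * (x - 1 / 2 ^ n)) • (xs n - xs (n - 1)))
    (h2 : ∀ n : ℕ, 1 ≤ n → ∀ x ∈ Set.Icc ((3:ℝ) / 2 ^ (n + 1)) (4 / 2 ^ (n + 1)),
      f x = ((2 ^ (2 * n + 2) : ℝ) * (4 / 2 ^ (n + 1) - x)) • (xs n - xs (n - 1)))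
    (hxs : ∀ n : ℕ, 2 ≤ n → ‖xs n - xs (n - 1)‖ ≤ 1 / 2 ^ (2 * n))
    :
    ∀ n : ℕ, 1 ≤ n → HasRiemannIntegral f ((1:ℝ) / 2 ^ n) 1 (xs n) :=
  general_tent_integral_general xs f hx0 h1 h2
end

section
/- There exists a continuous function f from the interval [-1,1] into a real normed vector space E (namely E = polynomial functions on [0,1] with sup norm) such that f is integrable on [-1,1] (with integral 0) but is not integrable on [0,1] nor on [-1,0]; in particular, the Chasles (interval additivity) property fails for E-valued integrals. -/
/-!
Let `φₙ` be an odd continuous bump supported in `±[2⁻⁽ⁿ⁺¹⁾, 2⁻ⁿ]` with `∫₀¹ φₙ = 1` and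
`|φₙ| ≤ 3·2ⁿ` (parabolic rather than tent-shaped), and `f x = ∑ φₙ(x) • tⁿ/n!`. At each `x`
only finitely many terms are nonzero, so `f x` is a polynomial. Since `∑ 3·2ⁿ/n! < ∞` the
series converges uniformly in `C([0,1])`, so `f` is continuous and can be integrated termwise:
`∫₀¹ f = ∑ tⁿ/n! = exp`, and, `f` being odd, `∫₋₁⁰ f = -exp` and `∫₋₁¹ f = 0`. A continuous
function into a Banach space is Riemann integrable with its Bochner integral as value, and
Riemann integrals are unique, so a Riemann integral of `f` in the polynomial subspace over
`[0,1]` or `[-1,0]` would have to be `±exp`, which is not a polynomial.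
-/

open Filter Topology

/-- The subspace of `C([0,1], ℝ)` consisting of restrictions of real polynomials. -/
def polySubmodule : Submodule ℝ C(Set.Icc (0:ℝ) 1, ℝ) where
  carrier := {g | ∃ p : Polynomial ℝ, ∀ t : Set.Icc (0:ℝ) 1, g t = p.eval (t : ℝ)}
  add_mem' := by
    rintro a b ⟨p, hp⟩ ⟨q, hq⟩
    exact ⟨p + q, fun t => by simp [hp t, hq t]⟩
  zero_mem' := ⟨0, fun t => by simp⟩
  smul_mem' := by
    rintro c a ⟨p, hp⟩
    exact ⟨Polynomial.C c * p, fun t => by simp [hp t]⟩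

open Set

section RiemannIntegral

variable {E : Type*} [NormedAddCommGroup E] [NormedSpace ℝ E] {g : ℝ → E} {a b : ℝ}

lemma mem_Icc_of_le_succ {n : ℕ} {p : ℕ → ℝ} (hp : ∀ i < n, p i ≤ p (i + 1)) {i : ℕ}
    (hi : i ≤ n) : p i ∈ Icc (p 0) (p n) := by
  have hmono : Monotone fun k => p (min k n) := monotone_nat_of_le_succ fun k => by
    rcases lt_or_ge k n with hk | hk
    · simpa [min_eq_left hk.le, min_eq_left (Nat.succ_le_of_lt hk)] using hp k hk
    · simp [min_eq_right hk, min_eq_right (hk.trans k.le_succ)]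
  simpa [min_eq_left hi] using And.intro (hmono (Nat.zero_le i)) (hmono hi)

lemma norm_smul_sub_integral_le_s15 [CompleteSpace E] {u w C : ℝ} {v : E} (huw : u ≤ w)
    (hg : ContinuousOn g (Icc u w)) (h : ∀ x ∈ Icc u w, ‖v - g x‖ ≤ C) :
    ‖(w - u) • v - ∫ x in u..w, g x‖ ≤ C * (w - u) := by
  rw [← intervalIntegral.integral_const,
    ← intervalIntegral.integral_sub intervalIntegrable_const (hg.intervalIntegrable_of_Icc huw)]
  calc ‖∫ x in u..w, v - g x‖ ≤ C * |w - u| :=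
        intervalIntegral.norm_integral_le_of_norm_le_const fun x hx =>
          h x (Ioc_subset_Icc_self (uIoc_of_le huw ▸ hx))
    _ = C * (w - u) := by rw [abs_of_nonneg (sub_nonneg.2 huw)]

theorem ContinuousOn.hasRiemannIntegral [CompleteSpace E] (hg : ContinuousOn g (Icc a b)) :
    HasRiemannIntegral g a b (∫ x in a..b, g x) := by
  intro ε hε
  set η := ε / (|b - a| + 1)
  have hη : 0 < η := by positivity
  obtain ⟨δ, hδ, hclose⟩ := Metric.uniformContinuousOn_iff_le.1
    (isCompact_Icc.uniformContinuousOn_of_continuous hg) η hη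
  refine ⟨δ, hδ, fun n p t hp0 hpn hinc hmesh ht => ?_⟩
  subst hp0 hpn
  have hle : ∀ i < n, p i ≤ p (i + 1) := fun i hi => (hinc i hi).le
  have hsub : ∀ i < n, Icc (p i) (p (i + 1)) ⊆ Icc (p 0) (p n) := fun i hi =>
    Icc_subset_Icc (mem_Icc_of_le_succ hle hi.le).1 (mem_Icc_of_le_succ hle hi).2
  have hpiece : ∀ i < n, ‖(p (i + 1) - p i) • g (t i) - ∫ x in p i..p (i + 1), g x‖ ≤
      η * (p (i + 1) - p i) := fun i hi =>
    norm_smul_sub_integral_le_s15 (hle i hi) (hg.mono (hsub i hi)) fun x hx =>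
      (dist_eq_norm _ _).symm.trans_le <| hclose _ (hsub i hi (ht i hi)) _ (hsub i hi hx) <| by
        rw [Real.dist_eq, abs_le]
        constructor <;> linarith [(ht i hi).1, (ht i hi).2, hx.1, hx.2, hmesh i hi]
  rw [← intervalIntegral.sum_integral_adjacent_intervals fun i hi =>
      (hg.mono (hsub i hi)).intervalIntegrable_of_Icc (hle i hi), ← Finset.sum_sub_distrib]
  calc _ ≤ ∑ i ∈ Finset.range n, η * (p (i + 1) - p i) :=
        norm_sum_le_of_le _ fun i hi => hpiece i (Finset.mem_range.1 hi)
    _ = η * (p n - p 0) := by rw [← Finset.mul_sum, Finset.sum_range_sub]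
    _ ≤ η * |p n - p 0| := mul_le_mul_of_nonneg_left (le_abs_self _) hη.le
    _ < η * (|p n - p 0| + 1) := by gcongr; linarith
    _ = ε := div_mul_cancel₀ ε (by positivity)

lemma exists_uniform_partition (hab : a < b) {δ : ℝ} (hδ : 0 < δ) :
    ∃ (n : ℕ) (p : ℕ → ℝ), p 0 = a ∧ p n = b ∧ (∀ i < n, p i < p (i + 1)) ∧
      ∀ i < n, p (i + 1) - p i < δ := by
  obtain ⟨n, hn⟩ := exists_nat_gt ((b - a) / δ)
  have hn0 : (0 : ℝ) < n := (div_pos (sub_pos.2 hab) hδ).trans hn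
  have hstep : ∀ i : ℕ, a + ((i + 1 : ℕ) : ℝ) * ((b - a) / n) - (a + i * ((b - a) / n)) =
      (b - a) / n := fun i => by push_cast; ring
  refine ⟨n, fun i => a + i * ((b - a) / n), by simp, by field_simp; ring,
    fun i _ => sub_pos.1 ?_, fun i _ => ?_⟩ <;> rw [hstep]
  · exact div_pos (sub_pos.2 hab) hn0
  · rwa [div_lt_iff₀ hn0, ← div_lt_iff₀' hδ]

theorem HasRiemannIntegral.unique (hab : a < b) {y y' : E} (h : HasRiemannIntegral g a b y)
    (h' : HasRiemannIntegral g a b y') : y = y' := by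
  by_contra hne
  have hd : 0 < ‖y - y'‖ := norm_pos_iff.2 (sub_ne_zero.2 hne)
  obtain ⟨δ, hδ, H⟩ := h (‖y - y'‖ / 2) (half_pos hd)
  obtain ⟨δ', hδ', H'⟩ := h' (‖y - y'‖ / 2) (half_pos hd)
  obtain ⟨n, p, hp0, hpn, hinc, hmesh⟩ := exists_uniform_partition hab (lt_min hδ hδ')
  have htag : ∀ i < n, p i ∈ Icc (p i) (p (i + 1)) := fun i hi => ⟨le_rfl, (hinc i hi).le⟩
  have hs := H n p p hp0 hpn hinc (fun i hi => (hmesh i hi).trans_le (min_le_left _ _)) htag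
  have hs' := H' n p p hp0 hpn hinc (fun i hi => (hmesh i hi).trans_le (min_le_right _ _)) htag
  set s := ∑ i ∈ Finset.range n, (p (i + 1) - p i) • g (p i)
  have := norm_sub_le (s - y') (s - y)
  rw [sub_sub_sub_cancel_left] at this
  linarith

theorem hasRiemannIntegral_comp_linearIsometry_iff {F : Type*} [NormedAddCommGroup F]
    [NormedSpace ℝ F] (L : E →ₗᵢ[ℝ] F) {y : E} :
    HasRiemannIntegral (fun x => L (g x)) a b (L y) ↔ HasRiemannIntegral g a b y := by
  have hnorm : ∀ (n : ℕ) (p t : ℕ → ℝ),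
      ‖∑ i ∈ Finset.range n, (p (i + 1) - p i) • L (g (t i)) - L y‖ =
        ‖∑ i ∈ Finset.range n, (p (i + 1) - p i) • g (t i) - y‖ := fun n p t => by
    simp only [← map_smul, ← map_sum, ← map_sub, L.norm_map]
  simp only [HasRiemannIntegral, hnorm]

theorem hasRiemannIntegral_subtype_of_integral_eq [CompleteSpace E] {S : Submodule ℝ E}
    {f : ℝ → S} {y : S} (hf : ContinuousOn (fun x => (f x : E)) (Icc a b))
    (hy : ∫ x in a..b, (f x : E) = y) : HasRiemannIntegral f a b y := by
  rw [← hasRiemannIntegral_comp_linearIsometry_iff S.subtypeₗᵢ]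
  change HasRiemannIntegral (fun x => (f x : E)) a b (y : E)
  exact hy ▸ hf.hasRiemannIntegral

theorem not_exists_hasRiemannIntegral_subtype_of_integral_notMem [CompleteSpace E]
    {S : Submodule ℝ E} {f : ℝ → S} (hab : a < b)
    (hf : ContinuousOn (fun x => (f x : E)) (Icc a b))
    (hS : ∫ x in a..b, (f x : E) ∉ S) : ¬ ∃ y, HasRiemannIntegral f a b y := by
  rintro ⟨y, hy⟩
  rw [← hasRiemannIntegral_comp_linearIsometry_iff S.subtypeₗᵢ] at hy
  exact hS (hy.unique hab hf.hasRiemannIntegral ▸ y.2)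

end RiemannIntegral

noncomputable section

open scoped Nat

/-- The factor `6 / (b - a) ^ 3` normalises the integral to `1`. -/
def bumpOn (a b x : ℝ) : ℝ := 6 / (b - a) ^ 3 * max 0 ((x - a) * (b - x))

section bumpOn

variable {a b : ℝ}

@[fun_prop]
lemma continuous_bumpOn : Continuous (bumpOn a b) := by
  unfold bumpOn; fun_prop

lemma bumpOn_nonneg (hab : a ≤ b) (x : ℝ) : 0 ≤ bumpOn a b x := by
  unfold bumpOn
  have := sub_nonneg.2 hab
  positivity

lemma bumpOn_le (hab : a < b) (x : ℝ) : bumpOn a b x ≤ 3 / (2 * (b - a)) := by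
  have hba := sub_pos.2 hab
  have hmax : max 0 ((x - a) * (b - x)) ≤ (b - a) ^ 2 / 4 :=
    max_le (by positivity) (by nlinarith [sq_nonneg (2 * x - a - b)])
  calc bumpOn a b x ≤ 6 / (b - a) ^ 3 * ((b - a) ^ 2 / 4) := by
        unfold bumpOn; gcongr
    _ = 3 / (2 * (b - a)) := by field_simp; ring

lemma bumpOn_eq_zero (hab : a ≤ b) {x : ℝ} (hx : x ∉ Ioo a b) : bumpOn a b x = 0 := by
  rw [mem_Ioo, not_and_or, not_lt, not_lt] at hx
  rw [bumpOn, max_eq_left, mul_zero]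
  rcases hx with hx | hx <;> nlinarith

lemma integral_bumpOn_eq_zero (hab : a ≤ b) {c d : ℝ} (hcd : c ≤ d)
    (h : ∀ x ∈ Icc c d, x ∉ Ioo a b) : ∫ x in c..d, bumpOn a b x = 0 := by
  rw [intervalIntegral.integral_congr (g := fun _ => 0) fun x hx =>
    bumpOn_eq_zero hab (h x (uIcc_of_le hcd ▸ hx)), intervalIntegral.integral_zero]

lemma integral_bumpOn {c d : ℝ} (hca : c ≤ a) (hab : a < b) (hbd : b ≤ d) :
    ∫ x in c..d, bumpOn a b x = 1 := by
  have hpar : ∀ x : ℝ, HasDerivAt (fun x => 6 / (b - a) ^ 3 *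
      ((a + b) / 2 * x ^ 2 - x ^ 3 / 3 - a * b * x)) (6 / (b - a) ^ 3 * ((x - a) * (b - x))) x :=
    fun x => (((((hasDerivAt_pow 2 x).const_mul ((a + b) / 2)).sub
      ((hasDerivAt_pow 3 x).div_const 3)).sub ((hasDerivAt_id' x).const_mul (a * b))).const_mul
        (6 / (b - a) ^ 3)).congr_deriv (by congr 1; norm_num; ring)
  have hmid : ∫ x in a..b, bumpOn a b x = 1 := by
    rw [intervalIntegral.integral_congr (g := fun x => 6 / (b - a) ^ 3 * ((x - a) * (b - x)))
      fun x hx => ?_, intervalIntegral.integral_eq_sub_of_hasDerivAt (fun x _ => hpar x)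
        ((by fun_prop : Continuous _).intervalIntegrable _ _)]
    · have := (sub_pos.2 hab).ne'
      field_simp
      ring
    · rw [uIcc_of_le hab.le] at hx
      rw [bumpOn, max_eq_right (mul_nonneg (by linarith [hx.1]) (by linarith [hx.2]))]
  rw [← intervalIntegral.integral_add_adjacent_intervals (a := c) (b := a) (c := d)
      (continuous_bumpOn.intervalIntegrable _ _) (continuous_bumpOn.intervalIntegrable _ _),
    ← intervalIntegral.integral_add_adjacent_intervals (a := a) (b := b) (c := d)
      (continuous_bumpOn.intervalIntegrable _ _) (continuous_bumpOn.intervalIntegrable _ _),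
    hmid, integral_bumpOn_eq_zero hab.le hca fun x hx h => by linarith [hx.2, h.1],
    integral_bumpOn_eq_zero hab.le hbd fun x hx h => by linarith [hx.1, h.2]]
  ring

end bumpOn

open Polynomial in
theorem Real.not_eqOn_exp_eval {U : Set ℝ} (hU : IsOpen U) (hne : U.Nonempty) (p : ℝ[X]) :
    ¬ EqOn Real.exp (fun x => p.eval x) U := by
  intro h
  have hiter : ∀ k, EqOn Real.exp (fun x => (derivative^[k] p).eval x) U := by
    intro k
    induction k with
    | zero => exact h
    | succ k ih =>
      intro x hx
      have := (Filter.eventuallyEq_of_mem (hU.mem_nhds hx) ih).deriv_eq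
      rwa [Real.deriv_exp, Polynomial.deriv, ← Function.iterate_succ_apply' derivative] at this
  obtain ⟨x, hx⟩ := hne
  have := hiter (p.natDegree + 1) hx
  simp only [iterate_derivative_eq_zero p.natDegree.lt_succ_self, eval_zero] at this
  exact (Real.exp_pos x).ne' this

def expOnUnit : C(Icc (0 : ℝ) 1, ℝ) := ⟨fun t => Real.exp t, by fun_prop⟩

lemma expOnUnit_notMem_polySubmodule : expOnUnit ∉ polySubmodule := by
  rintro ⟨p, hp⟩
  exact Real.not_eqOn_exp_eval isOpen_Ioo (nonempty_Ioo.2 zero_lt_one) p fun x hx =>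
    hp ⟨x, Ioo_subset_Icc_self hx⟩

def scaledMonomial (n : ℕ) : C(Icc (0 : ℝ) 1, ℝ) :=
  ⟨fun t => (t : ℝ) ^ n / n !, by fun_prop⟩

lemma scaledMonomial_mem_polySubmodule (n : ℕ) : scaledMonomial n ∈ polySubmodule :=
  ⟨Polynomial.C (n ! : ℝ)⁻¹ * Polynomial.X ^ n, fun t => by
    simp [scaledMonomial, div_eq_inv_mul]⟩

lemma norm_scaledMonomial_le (n : ℕ) : ‖scaledMonomial n‖ ≤ 1 / n ! := by
  refine (ContinuousMap.norm_le _ (by positivity)).2 fun ⟨t, ht0, ht1⟩ => ?_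
  change |t ^ n / (n ! : ℝ)| ≤ 1 / (n ! : ℝ)
  rw [abs_of_nonneg (by positivity)]
  exact div_le_div_of_nonneg_right (pow_le_one₀ ht0 ht1) (Nat.cast_nonneg _)

lemma hasSum_scaledMonomial : HasSum scaledMonomial expOnUnit := by
  have hsum : Summable scaledMonomial := .of_norm_bounded
    (by simpa using Real.summable_pow_div_factorial 1) norm_scaledMonomial_le
  convert hsum.hasSum
  ext t
  have hexp : HasSum (fun n => (t : ℝ) ^ n / n !) (Real.exp t) :=
    Real.exp_eq_exp_ℝ ▸ NormedSpace.expSeries_div_hasSum_exp (t : ℝ)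
  exact hexp.unique ((ContinuousMap.evalCLM ℝ t).hasSum hsum.hasSum)

def dyadic (n : ℕ) : ℝ := ((2 : ℝ) ^ n)⁻¹

lemma dyadic_pos (n : ℕ) : 0 < dyadic n := by unfold dyadic; positivity

lemma dyadic_sub_dyadic_succ (n : ℕ) : dyadic n - dyadic (n + 1) = dyadic (n + 1) := by
  simp only [dyadic, pow_succ]; ring

lemma dyadic_succ_lt (n : ℕ) : dyadic (n + 1) < dyadic n := by
  linarith [dyadic_sub_dyadic_succ n, dyadic_pos (n + 1)]

lemma dyadic_le_one (n : ℕ) : dyadic n ≤ 1 := inv_le_one_of_one_le₀ (one_le_pow₀ one_le_two)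

def oddBump (n : ℕ) (x : ℝ) : ℝ :=
  bumpOn (dyadic (n + 1)) (dyadic n) x - bumpOn (dyadic (n + 1)) (dyadic n) (-x)

@[fun_prop]
lemma continuous_oddBump (n : ℕ) : Continuous (oddBump n) := by
  unfold oddBump; fun_prop

lemma oddBump_neg (n : ℕ) (x : ℝ) : oddBump n (-x) = -oddBump n x := by
  simp [oddBump]

lemma oddBump_zero (n : ℕ) : oddBump n 0 = 0 := by
  simp [oddBump]

lemma abs_oddBump_le (n : ℕ) (x : ℝ) : |oddBump n x| ≤ 3 * 2 ^ n := by
  have hlt := dyadic_succ_lt n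
  have hbound : 3 / (2 * (dyadic n - dyadic (n + 1))) = 3 * 2 ^ n := by
    rw [dyadic_sub_dyadic_succ, dyadic, pow_succ]; field_simp
  exact hbound ▸ abs_sub_le_of_nonneg_of_le (bumpOn_nonneg hlt.le x) (bumpOn_le hlt x)
    (bumpOn_nonneg hlt.le (-x)) (bumpOn_le hlt (-x))

lemma oddBump_eq_zero_of_dyadic_le_abs {n : ℕ} {x : ℝ} (hx : dyadic n ≤ |x|) :
    oddBump n x = 0 := by
  have hlt := dyadic_succ_lt n
  have hpos := dyadic_pos (n + 1)
  rcases le_total 0 x with h | h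
  · rw [abs_of_nonneg h] at hx
    rw [oddBump, bumpOn_eq_zero hlt.le fun hm => by linarith [hm.2],
      bumpOn_eq_zero hlt.le fun hm => by linarith [hm.1], sub_zero]
  · rw [abs_of_nonpos h] at hx
    rw [oddBump, bumpOn_eq_zero hlt.le fun hm => by linarith [hm.1],
      bumpOn_eq_zero hlt.le fun hm => by linarith [hm.2], sub_zero]

lemma integral_oddBump (n : ℕ) : ∫ x in (0 : ℝ)..1, oddBump n x = 1 := by
  have hlt := dyadic_succ_lt n
  have hneg : ∫ x in (0 : ℝ)..1, bumpOn (dyadic (n + 1)) (dyadic n) (-x) = 0 := by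
    rw [intervalIntegral.integral_comp_neg, neg_zero]
    exact integral_bumpOn_eq_zero hlt.le (by norm_num) fun x hx hm => by
      linarith [hx.2, hm.1, dyadic_pos (n + 1)]
  unfold oddBump
  rw [intervalIntegral.integral_sub (continuous_bumpOn.intervalIntegrable _ _)
    ((by fun_prop : Continuous fun x => bumpOn _ _ (-x)).intervalIntegrable _ _), hneg, sub_zero,
    integral_bumpOn (dyadic_pos _).le hlt (dyadic_le_one n)]

def chaslesFun (x : ℝ) : C(Icc (0 : ℝ) 1, ℝ) := ∑' n, oddBump n x • scaledMonomial n

lemma norm_oddBump_smul_scaledMonomial_le (n : ℕ) (x : ℝ) :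
    ‖oddBump n x • scaledMonomial n‖ ≤ 3 * (2 ^ n / n !) := by
  rw [norm_smul, Real.norm_eq_abs, mul_div, ← mul_one_div]
  exact mul_le_mul (abs_oddBump_le n x) (norm_scaledMonomial_le n) (norm_nonneg _) (by positivity)

lemma summable_three_mul_pow_div_factorial : Summable fun n : ℕ => 3 * (2 ^ n / n ! : ℝ) :=
  (Real.summable_pow_div_factorial 2).mul_left 3

lemma hasSum_chaslesFun (x : ℝ) :
    HasSum (fun n => oddBump n x • scaledMonomial n) (chaslesFun x) :=
  (Summable.of_norm_bounded summable_three_mul_pow_div_factorial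
    (norm_oddBump_smul_scaledMonomial_le · x)).hasSum

lemma continuous_chaslesFun : Continuous chaslesFun :=
  continuous_tsum (fun n => by fun_prop) summable_three_mul_pow_div_factorial
    fun n x => norm_oddBump_smul_scaledMonomial_le n x

lemma chaslesFun_neg (x : ℝ) : chaslesFun (-x) = -chaslesFun x := by
  simp only [chaslesFun, oddBump_neg, neg_smul, tsum_neg]

lemma chaslesFun_mem_polySubmodule (x : ℝ) : chaslesFun x ∈ polySubmodule := by
  rcases eq_or_ne x 0 with rfl | hx
  · simp [chaslesFun, oddBump_zero]
  obtain ⟨N, hN⟩ := pow_unbounded_of_one_lt |x|⁻¹ one_lt_two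
  have htail : ∀ n ∉ Finset.range N, oddBump n x • scaledMonomial n = 0 := fun n hn => by
    rw [oddBump_eq_zero_of_dyadic_le_abs, zero_smul]
    rw [Finset.mem_range, not_lt] at hn
    exact inv_le_of_inv_le₀ (abs_pos.2 hx) (hN.le.trans (pow_le_pow_right₀ one_le_two hn))
  rw [chaslesFun, tsum_eq_sum htail]
  exact Submodule.sum_mem _ fun n _ =>
    Submodule.smul_mem _ _ (scaledMonomial_mem_polySubmodule n)

lemma hasSum_integral_chaslesFun (a b : ℝ) :
    HasSum (fun n => (∫ x in a..b, oddBump n x) • scaledMonomial n)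
      (∫ x in a..b, chaslesFun x) := by
  have h := intervalIntegral.hasSum_integral_of_dominated_convergence
    (μ := MeasureTheory.volume) (a := a) (b := b)
    (F := fun n x => oddBump n x • scaledMonomial n) _
    (fun n => ((continuous_oddBump n).smul continuous_const).aestronglyMeasurable)
    (fun n => .of_forall fun x _ => norm_oddBump_smul_scaledMonomial_le n x)
    (.of_forall fun _ _ => summable_three_mul_pow_div_factorial) intervalIntegrable_const
    (.of_forall fun x _ => hasSum_chaslesFun x)
  simpa only [intervalIntegral.integral_smul_const] using h

lemma integral_chaslesFun_zero_one : ∫ x in (0 : ℝ)..1, chaslesFun x = expOnUnit :=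
  (hasSum_integral_chaslesFun 0 1).unique (by simpa [integral_oddBump] using hasSum_scaledMonomial)

lemma integral_chaslesFun_neg_one_zero : ∫ x in (-1 : ℝ)..0, chaslesFun x = -expOnUnit := by
  have h := intervalIntegral.integral_comp_neg (a := 0) (b := 1) chaslesFun
  rw [neg_zero] at h
  rw [← h]
  simp only [chaslesFun_neg, intervalIntegral.integral_neg, integral_chaslesFun_zero_one]

lemma integral_chaslesFun_neg_one_one : ∫ x in (-1 : ℝ)..1, chaslesFun x = 0 := by
  rw [← intervalIntegral.integral_add_adjacent_intervals (b := 0)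
      (continuous_chaslesFun.intervalIntegrable _ _) (continuous_chaslesFun.intervalIntegrable _ _),
    integral_chaslesFun_neg_one_zero, integral_chaslesFun_zero_one, neg_add_cancel]

end

/-- There is a continuous function from `[-1,1]` into the space `E` of polynomial
functions on `[0,1]` (sup norm) which is integrable on `[-1,1]` with integral `0`,
but integrable neither on `[0,1]` nor on `[-1,0]`: Chasles' property fails. -/
theorem chasles_fails_for_polynomials :
    ∃ f : ℝ → polySubmodule,
      ContinuousOn f (Set.Icc (-1) 1) ∧
      HasRiemannIntegral f (-1) 1 0 ∧
      (¬ ∃ y, HasRiemannIntegral f 0 1 y) ∧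
      (¬ ∃ y, HasRiemannIntegral f (-1) 0 y) := by
  set f : ℝ → polySubmodule := fun x => ⟨chaslesFun x, chaslesFun_mem_polySubmodule x⟩
  have hf : Continuous fun x => (f x : C(Icc (0 : ℝ) 1, ℝ)) := continuous_chaslesFun
  refine ⟨f, (hf.subtype_mk _).continuousOn, ?_, ?_, ?_⟩
  · exact hasRiemannIntegral_subtype_of_integral_eq hf.continuousOn
      integral_chaslesFun_neg_one_one
  · exact not_exists_hasRiemannIntegral_subtype_of_integral_notMem zero_lt_one hf.continuousOn
      (integral_chaslesFun_zero_one ▸ expOnUnit_notMem_polySubmodule)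
  · exact not_exists_hasRiemannIntegral_subtype_of_integral_notMem neg_one_lt_zero
      hf.continuousOn
      (integral_chaslesFun_neg_one_zero ▸ neg_mem_iff.not.2 expOnUnit_notMem_polySubmodule)
end
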